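/- arXiv:2106.07002 — 11 statements merged into one kernel-verified Lean document; each statement's English description precedes it below -/
import Mathlib

section
/- For every (z,w) ∈ ℂ² with Im w = |z|², there exists s ∈ ℂ with s² = 1 − 4w² − 4iz² and 1 + s ≠ 0 such that the point (z̃, ζ̃, w̃) := ( 2z/(1+s), 2w/(1+s), 2w/(1+s) ) satisfies the defining equation of 𝒳, i.e. (1−|ζ̃|²)·Im w̃ = |z̃|² + Re( z̃² · conj(ζ̃) ). (This is the algebraic map ι(z,w) = (2z, 2w, 2w)/(1 + √(1−4w²−4iz²)) of the main classification theorem, sending ℍ³ into 𝒳.) -/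
/-!
With `t = 1 + s`, `W = 2w/t` and `Z = 2z/t`, the relation `s² = 1 − 4w² − 4iz²` says exactly
`1 + W² + iZ² = 2/t`. For arbitrary `Z, W` the defect `(1 − |W|²) Im W − Re(Z² W̄)` of the
defining equation of `𝒳` equals `Im (W · conj (1 + W² + iZ²))`, which here is
`Im (4w/|t|²) = 4 Im w/|t|² = 4|z|²/|t|² = |Z|²` on `ℍ³`.
-/

open Complex ComplexConjugate

lemma exists_sq_eq_and_one_add_ne_zero {K : Type*} [Field K] [IsAlgClosed K] [NeZero (2 : K)]
    (c : K) : ∃ s : K, s ^ 2 = c ∧ 1 + s ≠ 0 := by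
  obtain ⟨s, hs⟩ := IsAlgClosed.exists_pow_nat_eq c two_pos
  by_cases h : 1 + s = 0
  · refine ⟨-s, by rw [neg_sq, hs], ?_⟩
    rw [show s = -1 by linear_combination h, neg_neg, one_add_one_eq_two]
    exact two_ne_zero
  · exact ⟨s, hs, h⟩

lemma im_mul_conj_one_add_sq_add_I_mul_sq (Z W : ℂ) :
    (W * conj (1 + W ^ 2 + I * Z ^ 2)).im = (1 - ‖W‖ ^ 2) * W.im - (Z ^ 2 * conj W).re := by
  rw [Complex.sq_norm, normSq_apply]
  simp only [map_add, map_one, map_mul, conj_I, pow_two,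
    mul_im, mul_re, add_re, add_im, one_re, one_im, conj_re, conj_im, neg_re, neg_im, I_re, I_im]
  ring

lemma im_two_mul_div_mul_conj_two_div {z w : ℂ} (hH : w.im = ‖z‖ ^ 2) (t : ℂ) :
    (2 * w / t * conj (2 / t)).im = ‖2 * z / t‖ ^ 2 := by
  rw [Complex.sq_norm, normSq_div, div_mul_eq_mul_div, map_div₀, mul_div_assoc', div_div,
    mul_comm (conj t), mul_conj, div_ofReal_im, normSq_mul, ← Complex.sq_norm z, ← hH,
    map_ofNat, normSq_ofNat, show (2 : ℂ) * w * 2 = (4 : ℝ) * w by push_cast; ring, im_ofReal_mul]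
  ring

/-- For every `(z,w) ∈ ℂ²` with `Im w = |z|²`, there exists `s ∈ ℂ` with
`s² = 1 − 4w² − 4iz²` and `1 + s ≠ 0` such that the point
`(z̃, ζ̃, w̃) = (2z/(1+s), 2w/(1+s), 2w/(1+s))` satisfies the defining equation of `𝒳`,
i.e. `(1−|ζ̃|²)·Im w̃ = |z̃|² + Re(z̃²·conj ζ̃)`.  (This is the algebraic map `ι`.) -/
theorem sphere_to_tube_iota (z w : ℂ) (hH : w.im = ‖z‖ ^ 2) :
    ∃ s : ℂ, s ^ 2 = 1 - 4 * w ^ 2 - 4 * Complex.I * z ^ 2 ∧ 1 + s ≠ 0 ∧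
      (1 - ‖2 * w / (1 + s)‖ ^ 2) * (2 * w / (1 + s)).im
        = ‖2 * z / (1 + s)‖ ^ 2
          + ((2 * z / (1 + s)) ^ 2 * (starRingEnd ℂ) (2 * w / (1 + s))).re := by
  obtain ⟨s, hs, hs1⟩ := exists_sq_eq_and_one_add_ne_zero (1 - 4 * w ^ 2 - 4 * I * z ^ 2)
  refine ⟨s, hs, hs1, ?_⟩
  have hsum : 1 + (2 * w / (1 + s)) ^ 2 + I * (2 * z / (1 + s)) ^ 2 = 2 / (1 + s) := by
    field_simp
    linear_combination hs
  rw [← im_two_mul_div_mul_conj_two_div hH, ← hsum, im_mul_conj_one_add_sq_add_I_mul_sq]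
  ring
end

section
/- The quadratic polynomial map P₁(z,w) := ( zw, (z²−w²)/2, i(z²+w²)/2 ) maps the open unit ball 𝔹² = {(z,w) ∈ ℂ² : |z|² + |w|² < 1} into Cartan's domain D^IV₃, and maps the unit sphere 𝕊³ = {(z,w) ∈ ℂ² : |z|² + |w|² = 1} into the smooth boundary part ℛ of D^IV₃; that is, for |z|² + |w|² < 1 one has ϱ(P₁(z,w)) > 0 and |sum of squares of components of P₁(z,w)| < 1, while for |z|² + |w|² = 1 one has ϱ(P₁(z,w)) = 0 and |sum of squares of components of P₁(z,w)| < 1. -/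
/-- The defining function of Cartan's classical domain of type IV in `ℂ³`. -/
noncomputable def rhoIV (Z : ℂ × ℂ × ℂ) : ℝ :=
  1 - 2 * (‖Z.1‖ ^ 2 + ‖Z.2.1‖ ^ 2 + ‖Z.2.2‖ ^ 2)
    + ‖Z.1 ^ 2 + Z.2.1 ^ 2 + Z.2.2 ^ 2‖ ^ 2

/-- The sum of squares of the components of a point in `ℂ³`. -/
def sumSq (Z : ℂ × ℂ × ℂ) : ℂ := Z.1 ^ 2 + Z.2.1 ^ 2 + Z.2.2 ^ 2

/-- The quadratic polynomial map `P₁(z,w) = (zw, (z²−w²)/2, i(z²+w²)/2)`. -/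
noncomputable def P1 (z w : ℂ) : ℂ × ℂ × ℂ :=
  (z * w, (z ^ 2 - w ^ 2) / 2, Complex.I * (z ^ 2 + w ^ 2) / 2)

/-!
`P₁` takes values in the null quadric `z₁² + z₂² + z₃² = 0`, where `ϱ = 1 − 2‖Z‖²`, and by the
parallelogram law applied to `z²` and `w²` it satisfies `2‖P₁(z,w)‖² = (|z|² + |w|²)²`. Hence
`ϱ(P₁(z,w)) = 1 − (|z|² + |w|²)²`, positive on the ball and zero on the sphere, while the sum of
squares is `0`.
-/

lemma sumSq_P1 (z w : ℂ) : sumSq (P1 z w) = 0 := by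
  simp only [sumSq, P1]
  linear_combination (z ^ 2 + w ^ 2) ^ 2 / 4 * Complex.I_sq

lemma rhoIV_of_sumSq_eq_zero {Z : ℂ × ℂ × ℂ} (hZ : sumSq Z = 0) :
    rhoIV Z = 1 - 2 * (‖Z.1‖ ^ 2 + ‖Z.2.1‖ ^ 2 + ‖Z.2.2‖ ^ 2) := by
  rw [rhoIV, ← sumSq, hZ, norm_zero]
  ring

lemma norm_sq_P1 (z w : ℂ) :
    ‖(P1 z w).1‖ ^ 2 + ‖(P1 z w).2.1‖ ^ 2 + ‖(P1 z w).2.2‖ ^ 2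
      = (‖z‖ ^ 2 + ‖w‖ ^ 2) ^ 2 / 2 := by
  have parallelogram := parallelogram_law_with_norm ℝ (z ^ 2) (w ^ 2)
  simp only [P1, norm_mul, norm_div, norm_pow, Complex.norm_I, Complex.norm_ofNat] at *
  linear_combination parallelogram / 4

lemma rhoIV_P1 (z w : ℂ) : rhoIV (P1 z w) = 1 - (‖z‖ ^ 2 + ‖w‖ ^ 2) ^ 2 := by
  rw [rhoIV_of_sumSq_eq_zero (sumSq_P1 z w), norm_sq_P1]
  ring

/-- `P₁` maps the open unit ball `𝔹² ⊂ ℂ²` into Cartan's domain `D^IV₃`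
(`ϱ > 0` and `|sum of squares| < 1`) and the unit sphere `𝕊³` into the smooth boundary
part `ℛ` (`ϱ = 0` and `|sum of squares| < 1`). -/
theorem P1_proper_ball_to_DIV :
    (∀ z w : ℂ, ‖z‖ ^ 2 + ‖w‖ ^ 2 < 1 →
      0 < rhoIV (P1 z w) ∧ ‖sumSq (P1 z w)‖ < 1) ∧
    (∀ z w : ℂ, ‖z‖ ^ 2 + ‖w‖ ^ 2 = 1 →
      rhoIV (P1 z w) = 0 ∧ ‖sumSq (P1 z w)‖ < 1) := by
  refine ⟨fun z w hball => ⟨?_, ?_⟩, fun z w hsphere => ⟨?_, ?_⟩⟩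
  · rw [rhoIV_P1, sub_pos]
    exact pow_lt_one₀ (by positivity) hball two_ne_zero
  · simp [sumSq_P1]
  · rw [rhoIV_P1, hsphere]
    norm_num
  · simp [sumSq_P1]
end

section
/- The map P₋₁(z,w) := ( z, w²/2, i·w²/2 ) maps the open unit ball 𝔹² = {(z,w) ∈ ℂ² : |z|² + |w|² < 1} into Cartan's domain D^IV₃. Moreover, for (z,w) on the unit sphere 𝕊³ = {|z|² + |w|² = 1}: if w ≠ 0 then P₋₁(z,w) lies in the smooth boundary part ℛ (i.e. ϱ(P₋₁(z,w)) = 0 and |sum of squares of components| < 1), while if w = 0 then |sum of squares of the components of P₋₁(z,w)| = 1, so P₋₁ sends the circle {(z,0) : |z| = 1} into the singular part of the boundary of D^IV₃. -/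
/-- The quadratic polynomial map `P₋₁(z,w) = (z, w²/2, i·w²/2)`. -/
noncomputable def Pm1 (z w : ℂ) : ℂ × ℂ × ℂ := (z, w ^ 2 / 2, Complex.I * w ^ 2 / 2)

theorem rhoIV_eq_sumSq (Z : ℂ × ℂ × ℂ) :
    rhoIV Z = 1 - 2 * (‖Z.1‖ ^ 2 + ‖Z.2.1‖ ^ 2 + ‖Z.2.2‖ ^ 2) + ‖sumSq Z‖ ^ 2 :=
  rfl

theorem sumSq_Pm1 (z w : ℂ) : sumSq (Pm1 z w) = z ^ 2 := by
  simp only [sumSq, Pm1]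
  linear_combination (w ^ 4 / 4) * Complex.I_sq

theorem norm_sumSq_Pm1 (z w : ℂ) : ‖sumSq (Pm1 z w)‖ = ‖z‖ ^ 2 := by
  rw [sumSq_Pm1, norm_pow]

theorem rhoIV_Pm1 (z w : ℂ) :
    rhoIV (Pm1 z w) = (1 - ‖z‖ ^ 2 - ‖w‖ ^ 2) * (1 - ‖z‖ ^ 2 + ‖w‖ ^ 2) := by
  have hw : ‖w ^ 2 / 2‖ = ‖w‖ ^ 2 / 2 := by simp
  have hIw : ‖Complex.I * w ^ 2 / 2‖ = ‖w‖ ^ 2 / 2 := by simp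
  rw [rhoIV_eq_sumSq, norm_sumSq_Pm1]
  simp only [Pm1, hw, hIw]
  ring

/-- `P₋₁` maps the open unit ball into `D^IV₃`; on the unit sphere, if
`w ≠ 0` it lands in the smooth boundary part `ℛ` (`ϱ = 0` and `|sum of squares| < 1`),
while if `w = 0` then `|sum of squares| = 1`, i.e. the circle `{(z,0) : |z| = 1}` goes
into the singular part of the boundary. -/
theorem Pm1_proper_ball_to_DIV :
    (∀ z w : ℂ, ‖z‖ ^ 2 + ‖w‖ ^ 2 < 1 →
      0 < rhoIV (Pm1 z w) ∧ ‖sumSq (Pm1 z w)‖ < 1) ∧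
    (∀ z w : ℂ, ‖z‖ ^ 2 + ‖w‖ ^ 2 = 1 →
      (w ≠ 0 → rhoIV (Pm1 z w) = 0 ∧ ‖sumSq (Pm1 z w)‖ < 1) ∧
      (w = 0 → ‖sumSq (Pm1 z w)‖ = 1)) := by
  refine ⟨fun z w hball => ?_, fun z w hsphere => ⟨fun hw => ?_, fun hw => ?_⟩⟩
  · have hz : ‖z‖ ^ 2 < 1 := by nlinarith [sq_nonneg ‖w‖]
    rw [rhoIV_Pm1, norm_sumSq_Pm1]
    exact ⟨mul_pos (by linarith) (by nlinarith [sq_nonneg ‖w‖]), hz⟩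
  · have hw_pos : 0 < ‖w‖ ^ 2 := by positivity
    rw [rhoIV_Pm1, norm_sumSq_Pm1]
    exact ⟨by rw [show 1 - ‖z‖ ^ 2 - ‖w‖ ^ 2 = 0 by linarith, zero_mul], by linarith⟩
  · subst hw
    rw [norm_sumSq_Pm1]
    simpa using hsphere
end

section
/- Let R₀(z,w) := ( z/√2, (2w² + 2w − z²)/(4(w+1)), i(2w² + 2w + z²)/(4(w+1)) ). Then for all (z,w) ∈ ℂ² with w ≠ −1, ϱ(R₀(z,w)) = 1 − |z|² − |w|². In particular, R₀ is an isometric-type proper map: it maps the open unit ball 𝔹² into D^IV₃ and the part of the unit sphere 𝕊³ with w ≠ −1 into the zero set of ϱ. -/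
/-- The rational map `R₀(z,w) = (z/√2, (2w²+2w−z²)/(4(w+1)), i(2w²+2w+z²)/(4(w+1)))`. -/
noncomputable def R0 (z w : ℂ) : ℂ × ℂ × ℂ :=
  (z / (Real.sqrt 2 : ℂ), (2 * w ^ 2 + 2 * w - z ^ 2) / (4 * (w + 1)),
    Complex.I * (2 * w ^ 2 + 2 * w + z ^ 2) / (4 * (w + 1)))

/-!
The squares of the components of `R₀(z,w)` sum to `z²/(2(w+1))`, and the last two components
are `(u ∓ z²)/(4(w+1))` with `u = 2w(w+1)`, so by the parallelogram law their squared norms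
sum to `(8‖w‖²‖w+1‖² + 2‖z‖⁴)/(16‖w+1‖²)`; substituting into `ϱ` everything but
`1 - ‖z‖² - ‖w‖²` cancels. On the ball, `‖z‖² < 1 - ‖w‖² ≤ 2(1 - ‖w‖) ≤ 2‖w+1‖` gives
`‖z²/(2(w+1))‖ < 1`.
-/

lemma sumSq_R0 (z : ℂ) {w : ℂ} (hw : w + 1 ≠ 0) :
    sumSq (R0 z w) = z ^ 2 / (2 * (w + 1)) := by
  have hsqrt : ((Real.sqrt 2 : ℝ) : ℂ) ^ 2 = 2 := by
    norm_cast; exact Real.sq_sqrt zero_le_two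
  simp only [sumSq, R0, div_pow, mul_pow, Complex.I_sq, hsqrt]
  field_simp
  ring

lemma rhoIV_R0 (z : ℂ) {w : ℂ} (hw : w ≠ -1) :
    rhoIV (R0 z w) = 1 - ‖z‖ ^ 2 - ‖w‖ ^ 2 := by
  have hw₁ : w + 1 ≠ 0 := by rwa [Ne, add_eq_zero_iff_eq_neg]
  have hpar := parallelogram_law_with_norm ℝ (2 * w * (w + 1)) (z ^ 2)
  have hu : 2 * w ^ 2 + 2 * w = 2 * w * (w + 1) := by ring
  change 1 - 2 * _ + ‖sumSq (R0 z w)‖ ^ 2 = _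
  rw [sumSq_R0 z hw₁]
  simp only [R0, hu, norm_div, norm_mul, norm_pow, Complex.norm_I, Complex.norm_real,
    Real.norm_eq_abs, abs_of_nonneg (Real.sqrt_nonneg 2), Complex.norm_ofNat] at hpar ⊢
  rw [div_pow, Real.sq_sqrt zero_le_two]
  field_simp
  linear_combination (-8) * hpar

lemma ne_neg_one_of_norm_sq_add_norm_sq_lt_one {z w : ℂ} (h : ‖z‖ ^ 2 + ‖w‖ ^ 2 < 1) :
    w ≠ -1 := by
  rintro rfl
  simp at h
  nlinarith [sq_nonneg ‖z‖]

lemma norm_sumSq_R0_lt_one {z w : ℂ} (h : ‖z‖ ^ 2 + ‖w‖ ^ 2 < 1) : ‖sumSq (R0 z w)‖ < 1 := by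
  have hw₁ : w + 1 ≠ 0 := by
    rw [Ne, add_eq_zero_iff_eq_neg]; exact ne_neg_one_of_norm_sq_add_norm_sq_lt_one h
  have hpos : 0 < ‖w + 1‖ := norm_pos_iff.mpr hw₁
  have hlow : 1 - ‖w‖ ≤ ‖w + 1‖ := by simpa [add_comm] using norm_sub_norm_le (1 : ℂ) (-w)
  rw [sumSq_R0 z hw₁, norm_div, norm_pow, norm_mul, Complex.norm_two,
    div_lt_one (by positivity)]
  nlinarith [sq_nonneg (1 - ‖w‖)]

/-- For all `(z,w) ∈ ℂ²` with `w ≠ −1`, `ϱ(R₀(z,w)) = 1 − |z|² − |w|²`.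
In particular `R₀` maps the open unit ball `𝔹²` into `D^IV₃` and the part of the unit
sphere with `w ≠ −1` into the zero set of `ϱ`. -/
theorem R0_isometric_proper :
    (∀ z w : ℂ, w ≠ -1 → rhoIV (R0 z w) = 1 - ‖z‖ ^ 2 - ‖w‖ ^ 2) ∧
    (∀ z w : ℂ, ‖z‖ ^ 2 + ‖w‖ ^ 2 < 1 →
      0 < rhoIV (R0 z w) ∧ ‖sumSq (R0 z w)‖ < 1) ∧
    (∀ z w : ℂ, ‖z‖ ^ 2 + ‖w‖ ^ 2 = 1 → w ≠ -1 →
      rhoIV (R0 z w) = 0) := by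
  refine ⟨fun z w hw => rhoIV_R0 z hw, fun z w h => ⟨?_, norm_sumSq_R0_lt_one h⟩,
    fun z w h hw => by rw [rhoIV_R0 z hw]; linarith⟩
  rw [rhoIV_R0 z (ne_neg_one_of_norm_sq_add_norm_sq_lt_one h)]
  linarith
end

section
/- For all z, w, s ∈ ℂ with s² = 1 − z² − w², the point I(z,w) := ( z, w, 1 − s )/√2 satisfies ϱ(I(z,w)) = 1 − |z|² − |w|². (This is the irrational proper map I(z,w) = (z, w, 1 − √(1−z²−w²))/√2 from the ball into Cartan's domain of type IV; the identity holds for either choice of square root s.) -/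
/-! Since `s² = 1 - z² - w²`, the coordinates `(z, w, 1 - s)` have square sum `2 (1 - s)`.
After scaling by `1/√2` the square sum becomes `1 - s`, whose squared modulus exactly cancels
the contribution `‖1 - s‖²` of the third coordinate to `-2 ‖Z‖²`. -/

lemma Complex.div_ofReal_sqrt_sq (x : ℂ) {a : ℝ} (ha : 0 ≤ a) :
    (x / (Real.sqrt a : ℂ)) ^ 2 = x ^ 2 / a := by
  rw [div_pow, ← Complex.ofReal_pow, Real.sq_sqrt ha]

lemma Complex.norm_div_ofReal_sqrt_sq (x : ℂ) {a : ℝ} (ha : 0 ≤ a) :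
    ‖x / (Real.sqrt a : ℂ)‖ ^ 2 = ‖x‖ ^ 2 / a := by
  rw [norm_div, div_pow, Complex.norm_real, Real.norm_of_nonneg (Real.sqrt_nonneg a),
    Real.sq_sqrt ha]

lemma rhoIV_div_sqrt_two (a b c : ℂ) :
    rhoIV (a / (Real.sqrt 2 : ℂ), b / (Real.sqrt 2 : ℂ), c / (Real.sqrt 2 : ℂ))
      = 1 - (‖a‖ ^ 2 + ‖b‖ ^ 2 + ‖c‖ ^ 2) + ‖a ^ 2 + b ^ 2 + c ^ 2‖ ^ 2 / 4 := by
  have h2 : (0 : ℝ) ≤ 2 := zero_le_two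
  simp only [rhoIV, Complex.norm_div_ofReal_sqrt_sq _ h2, Complex.div_ofReal_sqrt_sq _ h2,
    ← add_div, Complex.ofReal_ofNat]
  rw [norm_div, Complex.norm_two]
  ring

/-- For all `z, w, s ∈ ℂ` with `s² = 1 − z² − w²`, the point
`I(z,w) = (z, w, 1 − s)/√2` satisfies `ϱ(I(z,w)) = 1 − |z|² − |w|²`.  (This is the
irrational proper map `I(z,w) = (z, w, 1 − √(1−z²−w²))/√2`, valid for either choice of
square root `s`.) -/
theorem I_map_rho_identity (z w s : ℂ) (hs : s ^ 2 = 1 - z ^ 2 - w ^ 2) :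
    rhoIV (z / (Real.sqrt 2 : ℂ), w / (Real.sqrt 2 : ℂ), (1 - s) / (Real.sqrt 2 : ℂ))
      = 1 - ‖z‖ ^ 2 - ‖w‖ ^ 2 := by
  have hsum : z ^ 2 + w ^ 2 + (1 - s) ^ 2 = 2 * (1 - s) := by linear_combination hs
  rw [rhoIV_div_sqrt_two, hsum, norm_mul, Complex.norm_two]
  ring
end

section
/- Let H(z,w) = (h₁,h₂,h₃) := ( zw, (z²−w²)/2, i(z²+w²)/2 ) and F(z,w) = (f₁,f₂,f₃) := ( z², √2·zw, w² ). Then for all z, w ∈ ℂ one has the identity 2(|h₁|² + |h₂|² + |h₃|²) − |h₁² + h₂² + h₃²|² = |f₁|² + |f₂|² + |f₃|². (This is the relation 2Σ|h_j|² − |Σh_j²|² = Σ|f_j|² linking the proper map P₁ into the type IV domain with the sphere map F : 𝕊³ → 𝕊⁵.) -/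
/-!
`H` takes values in the null cone `h₁² + h₂² + h₃² = 0`, so the quartic term vanishes, and
by the parallelogram law both `2 ∑ |h_j|²` and `∑ |f_j|²` equal `(|z|² + |w|²)²`.
-/

open Complex

theorem P1_sq_add_sq_add_sq_eq_zero (z w : ℂ) :
    (z * w) ^ 2 + ((z ^ 2 - w ^ 2) / 2) ^ 2 + (I * (z ^ 2 + w ^ 2) / 2) ^ 2 = 0 := by
  linear_combination (z ^ 2 + w ^ 2) ^ 2 / 4 * I_sq

theorem two_mul_P1_norm_sq_sum (z w : ℂ) :
    2 * (‖z * w‖ ^ 2 + ‖(z ^ 2 - w ^ 2) / 2‖ ^ 2 + ‖I * (z ^ 2 + w ^ 2) / 2‖ ^ 2)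
      = (‖z‖ ^ 2 + ‖w‖ ^ 2) ^ 2 := by
  have parallelogram := parallelogram_law_with_norm ℝ (z ^ 2) (w ^ 2)
  simp only [norm_mul, norm_div, norm_pow, norm_I, RCLike.norm_ofNat] at parallelogram ⊢
  linear_combination parallelogram / 2

theorem sphere_map_norm_sq_sum (z w : ℂ) :
    ‖z ^ 2‖ ^ 2 + ‖(Real.sqrt 2 : ℂ) * z * w‖ ^ 2 + ‖w ^ 2‖ ^ 2 = (‖z‖ ^ 2 + ‖w‖ ^ 2) ^ 2 := by
  simp only [norm_mul, norm_pow, norm_real, Real.norm_eq_abs,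
    abs_of_nonneg (Real.sqrt_nonneg 2), mul_pow, Real.sq_sqrt zero_le_two]
  ring

/-- For `H = (zw, (z²−w²)/2, i(z²+w²)/2)` and `F = (z², √2·zw, w²)`, one has
`2(|h₁|² + |h₂|² + |h₃|²) − |h₁² + h₂² + h₃²|² = |f₁|² + |f₂|² + |f₃|²` for all
`z, w ∈ ℂ`.  (The relation linking the proper map `P₁` into the type IV domain with the
sphere map `F : 𝕊³ → 𝕊⁵`.) -/
theorem P1_sphere_map_relation (z w : ℂ) :
    2 * (‖z * w‖ ^ 2 + ‖(z ^ 2 - w ^ 2) / 2‖ ^ 2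
          + ‖Complex.I * (z ^ 2 + w ^ 2) / 2‖ ^ 2)
      - ‖(z * w) ^ 2 + ((z ^ 2 - w ^ 2) / 2) ^ 2
          + (Complex.I * (z ^ 2 + w ^ 2) / 2) ^ 2‖ ^ 2
    = ‖z ^ 2‖ ^ 2 + ‖(Real.sqrt 2 : ℂ) * z * w‖ ^ 2
        + ‖w ^ 2‖ ^ 2 := by
  rw [P1_sq_add_sq_add_sq_eq_zero, two_mul_P1_norm_sq_sum, sphere_map_norm_sq_sum]
  simp
end

section
/- Let b ∈ ℂ and r ∈ ℝ, and define τ(z,ζ,w) := ( z + b − conj(b)·ζ , ζ , w + r + i|b|² + 2i·conj(b)·z + i·conj(b)²/2 − i·b²/2 − i·conj(b)²·ζ ). Then τ(0,0,0) = ( b, 0, r + i|b|² + i·conj(b)²/2 − i·b²/2 ), and whenever (z,ζ,w) satisfies the defining equation (1−|ζ|²)·Im w = |z|² + Re(z²·conj(ζ)), so does τ(z,ζ,w). (This 3-parameter family generates the transitive part of the automorphism group of 𝒳 corresponding to 𝔤₋₁ ⊕ 𝔤₋₂.) -/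
/-!
The map `τ` fixes `ζ`, and for fixed `ζ` it is affine in `(z, w)` with a `w`-translation chosen
exactly so that the gain `(1 - |ζ|²) Im(Δw)` in the first term of the defining function
`(1 - |ζ|²) Im w - |z|² - Re(z² ζ̄)` cancels the change of `|z|² + Re(z² ζ̄)` under
`z ↦ z + b - b̄ ζ`. Hence the defining function is `τ`-invariant, a polynomial identity in the
real coordinates.
-/

open Complex ComplexConjugate

noncomputable def tubeDefiningFunction (z ζ w : ℂ) : ℝ :=
  (1 - ‖ζ‖ ^ 2) * w.im - ‖z‖ ^ 2 - (z ^ 2 * conj ζ).re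

theorem tubeDefiningFunction_translate (b : ℂ) (r : ℝ) (z ζ w : ℂ) :
    tubeDefiningFunction (z + b - conj b * ζ) ζ
        (w + r + I * (normSq b : ℂ) + 2 * I * conj b * z + I * conj b ^ 2 / 2 - I * b ^ 2 / 2
          - I * conj b ^ 2 * ζ) =
      tubeDefiningFunction z ζ w := by
  simp only [tubeDefiningFunction, ← normSq_eq_norm_sq, normSq_apply]
  simp [pow_two]
  ring

theorem tubeDefiningFunction_eq_zero_iff (z ζ w : ℂ) :
    tubeDefiningFunction z ζ w = 0 ↔ (1 - ‖ζ‖ ^ 2) * w.im = ‖z‖ ^ 2 + (z ^ 2 * conj ζ).re := by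
  rw [tubeDefiningFunction, sub_sub, sub_eq_zero]

/-- For `b ∈ ℂ`, `r ∈ ℝ`, the translation-type automorphism
`τ(z,ζ,w) = (z + b − conj(b)ζ, ζ, w + r + i|b|² + 2i·conj(b)·z + i·conj(b)²/2 − i·b²/2 − i·conj(b)²·ζ)`
sends `(0,0,0)` to `(b, 0, r + i|b|² + i·conj(b)²/2 − i·b²/2)` and preserves the defining
equation `(1−|ζ|²)·Im w = |z|² + Re(z²·conj ζ)` of `𝒳`. -/
theorem transitive_automorphism_of_X (b : ℂ) (r : ℝ) :
    ((0 : ℂ) + b - (starRingEnd ℂ) b * 0 = b ∧ (0 : ℂ) = 0 ∧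
      (0 : ℂ) + (r : ℂ) + Complex.I * (Complex.normSq b : ℂ)
          + 2 * Complex.I * (starRingEnd ℂ) b * 0
          + Complex.I * ((starRingEnd ℂ) b) ^ 2 / 2 - Complex.I * b ^ 2 / 2
          - Complex.I * ((starRingEnd ℂ) b) ^ 2 * 0
        = (r : ℂ) + Complex.I * (Complex.normSq b : ℂ)
          + Complex.I * ((starRingEnd ℂ) b) ^ 2 / 2 - Complex.I * b ^ 2 / 2) ∧
    (∀ z ζ w : ℂ,
      (1 - ‖ζ‖ ^ 2) * w.im
          = ‖z‖ ^ 2 + (z ^ 2 * (starRingEnd ℂ) ζ).re →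
      (1 - ‖ζ‖ ^ 2) *
          (w + (r : ℂ) + Complex.I * (Complex.normSq b : ℂ)
            + 2 * Complex.I * (starRingEnd ℂ) b * z
            + Complex.I * ((starRingEnd ℂ) b) ^ 2 / 2 - Complex.I * b ^ 2 / 2
            - Complex.I * ((starRingEnd ℂ) b) ^ 2 * ζ).im
        = ‖z + b - (starRingEnd ℂ) b * ζ‖ ^ 2
          + ((z + b - (starRingEnd ℂ) b * ζ) ^ 2 * (starRingEnd ℂ) ζ).re) := by
  refine ⟨⟨by ring, rfl, by ring⟩, fun z ζ w h => ?_⟩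
  rwa [← tubeDefiningFunction_eq_zero_iff, tubeDefiningFunction_translate,
    tubeDefiningFunction_eq_zero_iff]
end

section
/- Let s ∈ ℝ and let (z,ζ,w) ∈ ℂ³ with sw ≠ 1. If (z,ζ,w) satisfies the defining equation (1−|ζ|²)·Im w = |z|² + Re(z²·conj(ζ)), then so does the point ( z/(1−sw) , (ζ − swζ − isz²)/(1−sw) , w/(1−sw) ). (This is the 1-parameter subgroup of automorphisms of 𝒳 obtained by integrating the infinitesimal automorphism zw·∂/∂z − iz²·∂/∂ζ + w²·∂/∂w spanning 𝔤₂.) -/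
/-!
With `ρ = (1 - |ζ|²) Im w - |z|² - Re(z² ζ̄)` and `D = 1 - sw`, the map pulls `ρ` back to `ρ / |D|²`,
so it preserves `{ρ = 0}`. Writing `ρ` as a polynomial in `z, ζ, w` and their conjugates, treated as
independent variables, this becomes an identity of rational functions.
-/

open Complex ComplexConjugate

noncomputable def tubeDefiningFun (z ζ w : ℂ) : ℝ :=
  (1 - ‖ζ‖ ^ 2) * w.im - ‖z‖ ^ 2 - (z ^ 2 * conj ζ).re

theorem ofReal_tubeDefiningFun (z ζ w : ℂ) :
    (tubeDefiningFun z ζ w : ℂ) = (1 - ζ * conj ζ) * ((w - conj w) / (2 * I))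
      - z * conj z - (z ^ 2 * conj ζ + conj z ^ 2 * ζ) / 2 := by
  simp only [tubeDefiningFun, ofReal_sub, ofReal_mul, ofReal_one, ofReal_pow, ← mul_conj',
    im_eq_sub_conj, re_eq_add_conj, map_mul, map_pow, conj_conj]

theorem tubeDefiningFun_g2_flow (s : ℝ) (z ζ w : ℂ) (h : (s : ℂ) * w ≠ 1) :
    tubeDefiningFun (z / (1 - s * w)) ((ζ - s * w * ζ - I * s * z ^ 2) / (1 - s * w))
        (w / (1 - s * w)) = tubeDefiningFun z ζ w / normSq (1 - s * w) := by
  have hD : 1 - (s : ℂ) * w ≠ 0 := sub_ne_zero.mpr h.symm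
  have hD' : 1 - (s : ℂ) * conj w ≠ 0 := by
    simpa using (map_ne_zero (starRingEnd ℂ)).mpr hD
  apply ofReal_injective
  rw [ofReal_div, ofReal_tubeDefiningFun, ofReal_tubeDefiningFun, ← mul_conj]
  simp only [map_div₀, map_sub, map_mul, map_pow, map_one, conj_ofReal, conj_I]
  field_simp
  ring

/-- For `s ∈ ℝ` and `(z,ζ,w) ∈ ℂ³` with `sw ≠ 1`, if `(z,ζ,w)` satisfies
the defining equation `(1−|ζ|²)·Im w = |z|² + Re(z²·conj ζ)` of `𝒳`, then so does
`(z/(1−sw), (ζ − swζ − isz²)/(1−sw), w/(1−sw))`.  (The 1-parameter subgroup of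
automorphisms of `𝒳` obtained by integrating the infinitesimal automorphism spanning
`𝔤₂`.) -/
theorem g2_automorphism_of_X (s : ℝ) (z ζ w : ℂ) (h1 : (s : ℂ) * w ≠ 1)
    (hX : (1 - ‖ζ‖ ^ 2) * w.im
        = ‖z‖ ^ 2 + (z ^ 2 * (starRingEnd ℂ) ζ).re) :
    (1 - ‖(ζ - (s : ℂ) * w * ζ - Complex.I * (s : ℂ) * z ^ 2) /
          (1 - (s : ℂ) * w)‖ ^ 2) * (w / (1 - (s : ℂ) * w)).im
      = ‖z / (1 - (s : ℂ) * w)‖ ^ 2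
        + ((z / (1 - (s : ℂ) * w)) ^ 2 *
            (starRingEnd ℂ) ((ζ - (s : ℂ) * w * ζ - Complex.I * (s : ℂ) * z ^ 2) /
              (1 - (s : ℂ) * w))).re := by
  have hρ : tubeDefiningFun z ζ w = 0 := by
    rw [tubeDefiningFun, hX]; ring
  have hflow := tubeDefiningFun_g2_flow s z ζ w h1
  rw [hρ, zero_div, tubeDefiningFun] at hflow
  linarith
end

section
/- Let a ∈ ℂ and λ, t ∈ ℝ, and let (z₁,z₂,z₃) ∈ ℂ³. Set Δ := (1 + 2|a|² + λ² − 2it) − 2·conj(a)²·(z₁² + z₂² + z₃²) − 4i·conj(a)·z₁ + (1 − 2|a|² − λ² + 2·conj(a)² + 2it)·z₂ − i·(1 − 2|a|² − λ² − 2·conj(a)² + 2it)·z₃, and define W = (W₁,W₂,W₃) ∈ ℂ³ by W₁ := −2ia/(1 + 2|a|² + λ² + 2it), W₂ := (λ² − 1 + 2|a|² − 2a² + 2it)/(2(1 + 2|a|² + λ² + 2it)), W₃ := i(λ² − 1 + 2|a|² + 2a² + 2it)/(2(1 + 2|a|² + λ² + 2it)). Then Δ = (1 + 2|a|² + λ²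 − 2it)·( 1 − 2( conj(W₁)z₁ + conj(W₂)z₂ + conj(W₃)z₃ ) + conj( W₁² + W₂² + W₃² )·( z₁² + z₂² + z₃² ) ). -/
/-!
With `d = 1 + 2|a|² + λ² + 2it`, the point `W` satisfies `d W₁ = -2ia`, `d (W₂ + iW₃) = -2a²` and
`d (W₂ - iW₃) = d - 2`. Factoring `W₂² + W₃² = (W₂ + iW₃)(W₂ - iW₃)` gives `d (W·Wᵗ) = -2a²`.
Conjugating these relations turns `d̄ · conj Wₖ` and `d̄ · conj (W·Wᵗ)` into polynomials in `ā`,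
`λ`, `t`, and `d̄` times the Bergman expression then agrees with `Δ` coefficient by coefficient.
-/

open Complex ComplexConjugate

theorem mul_sq_add_sq_add_sq_of_mul_eq_of_mul_add_eq_of_mul_sub_eq {K : Type*} [Field K]
    {i a d W₁ W₂ W₃ : K}
    (hi : i ^ 2 = -1) (hd : d ≠ 0) (h₁ : d * W₁ = -2 * i * a)
    (hp : d * (W₂ + i * W₃) = -2 * a ^ 2) (hm : d * (W₂ - i * W₃) = d - 2) :
    d * (W₁ ^ 2 + W₂ ^ 2 + W₃ ^ 2) = -2 * a ^ 2 := by
  refine mul_left_cancel₀ hd ?_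
  linear_combination (d * W₁ - 2 * i * a) * h₁ + d * (W₂ - i * W₃) * hp - 2 * a ^ 2 * hm
    + (4 * a ^ 2 + d ^ 2 * W₃ ^ 2) * hi

theorem one_add_two_normSq_add_sq_add_I_mul_ne_zero (a : ℂ) (l t : ℝ) :
    1 + 2 * (normSq a : ℂ) + (l : ℂ) ^ 2 + 2 * I * (t : ℂ) ≠ 0 := by
  intro h
  have hre := congrArg re h
  simp only [add_re, one_re, mul_re, re_ofNat, im_ofNat, ofReal_re, ofReal_im, I_re, I_im,
    ← ofReal_pow, zero_re] at hre
  nlinarith [normSq_nonneg a, sq_nonneg l]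

theorem conj_one_add_two_normSq_add_sq_add_I_mul (a : ℂ) (l t : ℝ) :
    conj (1 + 2 * (normSq a : ℂ) + (l : ℂ) ^ 2 + 2 * I * (t : ℂ)) =
      1 + 2 * (normSq a : ℂ) + (l : ℂ) ^ 2 - 2 * I * (t : ℂ) := by
  simp only [map_add, map_mul, map_one, map_ofNat, map_pow, conj_ofReal, conj_I]
  ring

/-- The common denominator `Δ` of a general CR automorphism of the germ of
the smooth boundary of `D^IV₃` factors as
`Δ = (1 + 2|a|² + λ² − 2it)·(1 − 2(conj(W₁)z₁ + conj(W₂)z₂ + conj(W₃)z₃)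
      + conj(W₁² + W₂² + W₃²)·(z₁² + z₂² + z₃²))`,
where `W = (W₁,W₂,W₃)` is the point of `D^IV₃` mapped to the origin. -/
theorem delta_bergman_factorization (a : ℂ) (l t : ℝ) (z1 z2 z3 W1 W2 W3 Δ : ℂ)
    (hW1 : W1 = -2 * Complex.I * a /
        (1 + 2 * (Complex.normSq a : ℂ) + (l : ℂ) ^ 2 + 2 * Complex.I * (t : ℂ)))
    (hW2 : W2 = ((l : ℂ) ^ 2 - 1 + 2 * (Complex.normSq a : ℂ) - 2 * a ^ 2
          + 2 * Complex.I * (t : ℂ)) /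
        (2 * (1 + 2 * (Complex.normSq a : ℂ) + (l : ℂ) ^ 2 + 2 * Complex.I * (t : ℂ))))
    (hW3 : W3 = Complex.I * ((l : ℂ) ^ 2 - 1 + 2 * (Complex.normSq a : ℂ) + 2 * a ^ 2
          + 2 * Complex.I * (t : ℂ)) /
        (2 * (1 + 2 * (Complex.normSq a : ℂ) + (l : ℂ) ^ 2 + 2 * Complex.I * (t : ℂ))))
    (hΔ : Δ = (1 + 2 * (Complex.normSq a : ℂ) + (l : ℂ) ^ 2 - 2 * Complex.I * (t : ℂ))
          - 2 * ((starRingEnd ℂ) a) ^ 2 * (z1 ^ 2 + z2 ^ 2 + z3 ^ 2)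
          - 4 * Complex.I * (starRingEnd ℂ) a * z1
          + (1 - 2 * (Complex.normSq a : ℂ) - (l : ℂ) ^ 2 + 2 * ((starRingEnd ℂ) a) ^ 2
              + 2 * Complex.I * (t : ℂ)) * z2
          - Complex.I * (1 - 2 * (Complex.normSq a : ℂ) - (l : ℂ) ^ 2
              - 2 * ((starRingEnd ℂ) a) ^ 2 + 2 * Complex.I * (t : ℂ)) * z3) :
    Δ = (1 + 2 * (Complex.normSq a : ℂ) + (l : ℂ) ^ 2 - 2 * Complex.I * (t : ℂ)) *
        (1 - 2 * ((starRingEnd ℂ) W1 * z1 + (starRingEnd ℂ) W2 * z2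
              + (starRingEnd ℂ) W3 * z3)
          + (starRingEnd ℂ) (W1 ^ 2 + W2 ^ 2 + W3 ^ 2) * (z1 ^ 2 + z2 ^ 2 + z3 ^ 2)) := by
  set d := 1 + 2 * (normSq a : ℂ) + (l : ℂ) ^ 2 + 2 * I * (t : ℂ)
  have hd : d ≠ 0 := one_add_two_normSq_add_sq_add_I_mul_ne_zero a l t
  have h₁ : d * W1 = -2 * I * a := by rw [hW1]; field_simp
  have h₂ : 2 * d * W2 = (l : ℂ) ^ 2 - 1 + 2 * (normSq a : ℂ) - 2 * a ^ 2 + 2 * I * t := by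
    rw [hW2]; field_simp
  have h₃ : 2 * d * W3 = I * ((l : ℂ) ^ 2 - 1 + 2 * (normSq a : ℂ) + 2 * a ^ 2 + 2 * I * t) := by
    rw [hW3]; field_simp
  have hS : d * (W1 ^ 2 + W2 ^ 2 + W3 ^ 2) = -2 * a ^ 2 :=
    mul_sq_add_sq_add_sq_of_mul_eq_of_mul_add_eq_of_mul_sub_eq I_sq hd h₁
      (by linear_combination (h₂ + I * h₃ + (d - 2 + 2 * a ^ 2) * I_sq) / 2)
      (by linear_combination (h₂ - I * h₃ - (d - 2 + 2 * a ^ 2) * I_sq) / 2)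
  have hconj : conj d = 1 + 2 * (normSq a : ℂ) + (l : ℂ) ^ 2 - 2 * I * (t : ℂ) :=
    conj_one_add_two_normSq_add_sq_add_I_mul a l t
  have c₁ := congrArg conj h₁
  have c₂ := congrArg conj h₂
  have c₃ := congrArg conj h₃
  have cS := congrArg conj hS
  simp only [map_add, map_sub, map_mul, map_neg, map_one, map_ofNat, map_pow, conj_I,
    conj_ofReal, hconj] at c₁ c₂ c₃
  simp only [map_mul, map_neg, map_ofNat, map_pow, hconj] at cS
  rw [hΔ]
  linear_combination 2 * z1 * c₁ + z2 * c₂ + z3 * c₃ - (z1 ^ 2 + z2 ^ 2 + z3 ^ 2) * cS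
end

section
/- Let t ∈ ℝ, and let (z,w) ∈ ℂ² with w ≠ −t. Define the point (z', ζ', w') := ( z , −iz²/(w + t) , w + t ). Then w'ζ' + i·z'² = 0, and (1 − |ζ'|²)·Im w' − |z'|² − Re( z'²·conj(ζ') ) = Im w − |z|². In particular, if Im w = |z|² (and w ≠ −t), then (z',ζ',w') satisfies the defining equation of 𝒳, so the map H_t(z,w) = (z, −iz²/(w+t), w+t) sends ℍ³ ∖ {(0,−t)} into the zero set of the defining function of 𝒳 and into the variety V = {wζ + iz² = 0}. -/
/-!
Along `ζ = -i z² / w` one has `z² · conj ζ = i |z|⁴ w / |w|²`, whose real part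
`-|z|⁴ Im w / |w|²` cancels the term `|ζ|² Im w = |z|⁴ Im w / |w|²` of `ρ̃`, leaving
`ρ̃ = Im w - |z|²`. Translating `w` by a real `t` does not change `Im w`.
-/

open Complex ComplexConjugate

noncomputable def lightConeTubeDefiningFunction (z ζ w : ℂ) : ℝ :=
  (1 - ‖ζ‖ ^ 2) * w.im - ‖z‖ ^ 2 - (z ^ 2 * conj ζ).re

lemma mul_neg_I_mul_div_add_I_mul {u : ℂ} (hu : u ≠ 0) (a : ℂ) :
    u * (-I * a / u) + I * a = 0 := by
  rw [mul_div_cancel₀ _ hu]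
  ring

lemma norm_neg_I_mul_div_sq (a u : ℂ) : ‖-I * a / u‖ ^ 2 = ‖a‖ ^ 2 / ‖u‖ ^ 2 := by
  simp [div_pow]

lemma re_mul_conj_neg_I_mul_div (a u : ℂ) :
    (a * conj (-I * a / u)).re = -(‖a‖ ^ 2 * u.im / ‖u‖ ^ 2) := by
  have h : a * conj (-I * a / u) = (‖a‖ ^ 2 / ‖u‖ ^ 2 : ℝ) * (I * u) := by
    by_cases hu : u = 0
    · simp [hu]
    · push_cast
      rw [← mul_conj', ← mul_conj' u, map_div₀, map_mul, map_neg, conj_I]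
      field_simp [(map_ne_zero conj).mpr hu]
  rw [h, re_ofReal_mul, mul_re, I_re, I_im]
  ring

lemma lightConeTubeDefiningFunction_neg_I_mul_sq_div (z u : ℂ) :
    lightConeTubeDefiningFunction z (-I * z ^ 2 / u) u = u.im - ‖z‖ ^ 2 := by
  rw [lightConeTubeDefiningFunction, norm_neg_I_mul_div_sq, re_mul_conj_neg_I_mul_div]
  ring

/-- For `t ∈ ℝ` and `(z,w) ∈ ℂ²` with `w ≠ −t`, the point
`(z', ζ', w') = (z, −iz²/(w+t), w+t)` satisfies `w'ζ' + i·z'² = 0` and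
`(1 − |ζ'|²)·Im w' − |z'|² − Re(z'²·conj ζ') = Im w − |z|²`.  In particular, if
`Im w = |z|²` then `(z',ζ',w')` satisfies the defining equation of `𝒳`: the map
`H_t(z,w) = (z, −iz²/(w+t), w+t)` sends `ℍ³ ∖ {(0,−t)}` into the zero set of the
defining function of `𝒳` and into the variety `V = {wζ + iz² = 0}`. -/
theorem Ht_into_X_inter_V (t : ℝ) (z w : ℂ) (hw : w ≠ -(t : ℂ)) :
    (w + (t : ℂ)) * (-Complex.I * z ^ 2 / (w + (t : ℂ))) + Complex.I * z ^ 2 = 0 ∧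
    ((1 - ‖-Complex.I * z ^ 2 / (w + (t : ℂ))‖ ^ 2) * (w + (t : ℂ)).im
        - ‖z‖ ^ 2
        - (z ^ 2 * (starRingEnd ℂ) (-Complex.I * z ^ 2 / (w + (t : ℂ)))).re
      = w.im - ‖z‖ ^ 2) ∧
    (w.im = ‖z‖ ^ 2 →
      (1 - ‖-Complex.I * z ^ 2 / (w + (t : ℂ))‖ ^ 2) * (w + (t : ℂ)).im
        = ‖z‖ ^ 2
          + (z ^ 2 * (starRingEnd ℂ) (-Complex.I * z ^ 2 / (w + (t : ℂ)))).re) := by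
  have hu : w + (t : ℂ) ≠ 0 := fun h => hw (eq_neg_of_add_eq_zero_left h)
  have hρ : lightConeTubeDefiningFunction z (-I * z ^ 2 / (w + t)) (w + t) = w.im - ‖z‖ ^ 2 := by
    rw [lightConeTubeDefiningFunction_neg_I_mul_sq_div, add_im, ofReal_im, add_zero]
  refine ⟨mul_neg_I_mul_div_add_I_mul hu _, hρ, fun h => ?_⟩
  rw [lightConeTubeDefiningFunction, h, sub_self] at hρ
  linarith
end

section
/- Let U ⊆ ℂ² be a connected open neighbourhood of 0 and let f, φ, g : U → ℂ be holomorphic (complex analytic) functions with f(0) = φ(0) = g(0) = 0. Suppose that for every (z,w) ∈ U, ( g(z,w) − conj(g(z,w)) )·( 1 − |φ(z,w)|² ) − 2i·|f(z,w)|² − 2i·Re( f(z,w)²·conj(φ(z,w)) ) = 0. Then g ≡ 0 and f ≡ 0 on U. (Hence every nowhere CR transversal CR map H = (f, φ, g) from ℍ³ into 𝒳 with H(0) = 0 has the form (z,w) ↦ (0, φ(z,w), 0).) -/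
/-!
Taking imaginary parts, the mapping equation reads
`Im g · (1 - |φ|²) = |f|² + Re (f² φ̄) ≥ |f|² (1 - |φ|)`.
Near `0` we have `|φ| < 1`, so `Im g ≥ 0` there, with equality at `0`; by the minimum principle
for `Im g` the holomorphic function `g` vanishes near `0`, and then the inequality forces `f = 0`
near `0`. The identity theorem, proved by restricting to complex lines, propagates both to `U`.
-/

open Set Filter Topology Metric Complex

section IdentityTheorem

variable {E F : Type*} [NormedAddCommGroup E] [NormedSpace ℂ E]
  [NormedAddCommGroup F] [NormedSpace ℂ F] [CompleteSpace F]

theorem DifferentiableOn.eqOn_zero_of_convex_of_eventuallyEq_zero {h : E → F} {s : Set E}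
    (hh : DifferentiableOn ℂ h s) (hs : IsOpen s) (hconv : Convex ℝ s) {q : E} (hq : q ∈ s)
    (hq0 : h =ᶠ[𝓝 q] 0) : EqOn h 0 s := by
  intro x hx
  set L : ℂ → E := fun t => q + t • (x - q) with hL
  have hLd : Differentiable ℂ L := by fun_prop
  have hVopen : IsOpen (L ⁻¹' s) := hs.preimage hLd.continuous
  have hVconv : Convex ℝ (L ⁻¹' s) :=
    (hconv.translate_preimage_right q).is_linear_preimage
      ((LinearMap.toSpanSingleton ℂ E (x - q)).restrictScalars ℝ).isLinear
  have hLq : Tendsto L (𝓝 0) (𝓝 q) := by simpa [hL] using hLd.continuous.tendsto 0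
  have hline := ((hh.comp hLd.differentiableOn fun _ ht => ht).analyticOnNhd hVopen)
    |>.eqOn_zero_of_preconnected_of_eventuallyEq_zero hVconv.isPreconnected
      (show (0 : ℂ) ∈ L ⁻¹' s by simpa [hL] using hq) (hLq.eventually hq0)
      (show (1 : ℂ) ∈ L ⁻¹' s by simpa [hL] using hx)
  simpa [hL] using hline

theorem DifferentiableOn.eqOn_zero_of_preconnected_of_eventuallyEq_zero {h : E → F} {U : Set E}
    (hh : DifferentiableOn ℂ h U) (hU : IsOpen U) (hconn : IsPreconnected U) {p₀ : E}
    (hp₀ : p₀ ∈ U) (h0 : h =ᶠ[𝓝 p₀] 0) : EqOn h 0 U := by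
  set S : Set E := {p | h =ᶠ[𝓝 p] 0}
  have hclosed : closure S ∩ U ⊆ S := by
    rintro p ⟨hpS, hpU⟩
    obtain ⟨r, hr, hball⟩ := Metric.isOpen_iff.1 hU p hpU
    obtain ⟨q, hqS, hqp⟩ := Metric.mem_closure_iff.1 hpS r hr
    have hq : q ∈ ball p r := by rwa [mem_ball, dist_comm]
    exact eventuallyEq_of_mem (ball_mem_nhds p hr) <|
      (hh.mono hball).eqOn_zero_of_convex_of_eventuallyEq_zero isOpen_ball (convex_ball p r) hq hqS
  have hUS : U ⊆ S :=
    hconn.subset_of_closure_inter_subset isOpen_setOfPred_eventually_nhds ⟨p₀, hp₀, h0⟩ hclosed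
  exact fun p hp => (hUS hp).self_of_nhds

end IdentityTheorem

/-- `1 / (g - g c + i)` has modulus at most `1`, attained at `c`. -/
theorem DifferentiableOn.eqOn_of_isMinOn_im {E : Type*} [NormedAddCommGroup E] [NormedSpace ℂ E]
    {g : E → ℂ} {U : Set E} (hg : DifferentiableOn ℂ g U) (hU : IsOpen U)
    (hconn : IsPreconnected U) {c : E} (hc : c ∈ U) (hmin : IsMinOn (fun p => (g p).im) U c) :
    EqOn g (Function.const E (g c)) U := by
  set k : E → ℂ := fun p => g p - g c + I
  have one_le_im : ∀ p ∈ U, 1 ≤ (k p).im := fun p hp => by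
    simpa [k] using hmin hp
  have hk0 : ∀ p ∈ U, k p ≠ 0 := fun p hp hkp => by
    linarith [one_le_im p hp, show (k p).im = 0 by simp [hkp]]
  have hkc : k c = I := by simp [k]
  have hmax : IsMaxOn (fun p => ‖(k p)⁻¹‖) U c := isMaxOn_iff.2 fun p hp => by
    rw [hkc, norm_inv, norm_inv, norm_I, inv_one]
    exact inv_le_one_of_one_le₀ ((one_le_im p hp).trans (im_le_norm _))
  have hconst := Complex.eqOn_of_isPreconnected_of_isMaxOn_norm hconn hU
    ((hg.sub_const _).add_const _ |>.inv hk0) hc hmax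
  intro p hp
  simpa [k, sub_eq_zero] using inv_injective (hconst hp)

theorem im_mul_one_sub_norm_sq_eq {a b c : ℂ}
    (h : (a - (starRingEnd ℂ) a) * (1 - (‖b‖ : ℂ) ^ 2) - 2 * I * (‖c‖ : ℂ) ^ 2
      - 2 * I * (((c ^ 2 * (starRingEnd ℂ) b).re : ℝ) : ℂ) = 0) :
    a.im * (1 - ‖b‖ ^ 2) = ‖c‖ ^ 2 + (c ^ 2 * (starRingEnd ℂ) b).re := by
  rw [sub_conj] at h
  have h' : 2 * I * ((a.im * (1 - ‖b‖ ^ 2) - (‖c‖ ^ 2 + (c ^ 2 * (starRingEnd ℂ) b).re) : ℝ)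
      : ℂ) = 0 := by
    push_cast at h ⊢
    linear_combination h
  have h2I : (2 * I : ℂ) ≠ 0 := mul_ne_zero two_ne_zero I_ne_zero
  exact sub_eq_zero.1 (ofReal_eq_zero.1 ((mul_eq_zero.1 h').resolve_left h2I))

theorem norm_sq_mul_one_sub_norm_le (b c : ℂ) :
    ‖c‖ ^ 2 * (1 - ‖b‖) ≤ ‖c‖ ^ 2 + (c ^ 2 * (starRingEnd ℂ) b).re := by
  have := neg_le_of_abs_le (abs_re_le_norm (c ^ 2 * (starRingEnd ℂ) b))
  rw [norm_mul, norm_pow, norm_conj] at this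
  linarith

section MappingEquation

variable {a b c : ℂ} (hb : ‖b‖ < 1)
  (h : a.im * (1 - ‖b‖ ^ 2) = ‖c‖ ^ 2 + (c ^ 2 * (starRingEnd ℂ) b).re)
include hb h

theorem im_nonneg_of_mapping_eq : 0 ≤ a.im := by
  have hpos : 0 < 1 - ‖b‖ ^ 2 := by nlinarith [norm_nonneg b]
  have := norm_sq_mul_one_sub_norm_le b c
  nlinarith [norm_nonneg c, mul_nonneg (sq_nonneg ‖c‖) (sub_nonneg.2 hb.le)]

theorem eq_zero_of_mapping_eq (ha : a.im = 0) : c = 0 := by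
  have hle : ‖c‖ ^ 2 * (1 - ‖b‖) ≤ 0 := by
    linarith [norm_sq_mul_one_sub_norm_le b c, show a.im * (1 - ‖b‖ ^ 2) = 0 by simp [ha]]
  simpa using nonpos_of_mul_nonpos_left hle (by linarith)

end MappingEquation

theorem nowhere_transversal_maps_general (U : Set (ℂ × ℂ)) (hU : IsOpen U)
    (hconn : IsConnected U) (h0 : ((0 : ℂ), (0 : ℂ)) ∈ U)
    (f φ g : ℂ × ℂ → ℂ)
    (hf : DifferentiableOn ℂ f U) (hφ : DifferentiableOn ℂ φ U)
    (hg : DifferentiableOn ℂ g U)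
    (hφ0 : φ (0, 0) = 0) (hg0 : g (0, 0) = 0)
    (heq : ∀ p ∈ U,
      (g p - (starRingEnd ℂ) (g p)) * (1 - (‖φ p‖ : ℂ) ^ 2)
        - 2 * Complex.I * (‖f p‖ : ℂ) ^ 2
        - 2 * Complex.I * ((((f p) ^ 2 * (starRingEnd ℂ) (φ p)).re : ℝ) : ℂ) = 0) :
    ∀ p ∈ U, g p = 0 ∧ f p = 0 := by
  have hreal : ∀ p ∈ U, (g p).im * (1 - ‖φ p‖ ^ 2)
      = ‖f p‖ ^ 2 + (f p ^ 2 * (starRingEnd ℂ) (φ p)).re :=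
    fun p hp => im_mul_one_sub_norm_sq_eq (heq p hp)
  obtain ⟨ε, hε, hB⟩ := Metric.isOpen_iff.1
    (hφ.continuousOn.isOpen_inter_preimage hU (isOpen_ball (x := (0 : ℂ)) (ε := 1)))
    (0, 0) ⟨h0, by simp [hφ0]⟩
  have hBU : ball (0, 0) ε ⊆ U := fun p hp => (hB hp).1
  have hφB : ∀ p ∈ ball (0, 0) ε, ‖φ p‖ < 1 := fun p hp => by simpa using (hB hp).2
  have hgB : EqOn g 0 (ball (0, 0) ε) := by
    have hmin : IsMinOn (fun p => (g p).im) (ball (0, 0) ε) (0, 0) := fun p hp => by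
      simpa [hg0] using im_nonneg_of_mapping_eq (hφB p hp) (hreal p (hBU hp))
    simpa [hg0] using (hg.mono hBU).eqOn_of_isMinOn_im isOpen_ball
      (convex_ball _ _).isPreconnected (mem_ball_self hε) hmin
  have hgU := hg.eqOn_zero_of_preconnected_of_eventuallyEq_zero hU hconn.isPreconnected h0
    (eventuallyEq_of_mem (ball_mem_nhds _ hε) hgB)
  have hfB : EqOn f 0 (ball (0, 0) ε) := fun p hp =>
    eq_zero_of_mapping_eq (hφB p hp) (hreal p (hBU hp)) (by simp [hgU (hBU hp)])
  have hfU := hf.eqOn_zero_of_preconnected_of_eventuallyEq_zero hU hconn.isPreconnected h0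
    (eventuallyEq_of_mem (ball_mem_nhds _ hε) hfB)
  exact fun p hp => ⟨hgU hp, hfU hp⟩

/-- Let `U ⊆ ℂ²` be a connected open neighbourhood of `0` and let
`f, φ, g : ℂ² → ℂ` be holomorphic on `U` with `f(0) = φ(0) = g(0) = 0`.  If the
mapping equation with identically vanishing transversality factor
`(g − conj g)(1 − |φ|²) − 2i|f|² − 2i·Re(f²·conj φ) = 0`
holds at every point of `U`, then `g ≡ 0` and `f ≡ 0` on `U`.  (Hence every nowhere CR
transversal CR map `H = (f,φ,g)` from `ℍ³` into `𝒳` with `H(0) = 0` has the form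
`(z,w) ↦ (0, φ(z,w), 0)`.) -/
theorem nowhere_transversal_maps (U : Set (ℂ × ℂ)) (hU : IsOpen U)
    (hconn : IsConnected U) (h0 : ((0 : ℂ), (0 : ℂ)) ∈ U)
    (f φ g : ℂ × ℂ → ℂ)
    (hf : DifferentiableOn ℂ f U) (hφ : DifferentiableOn ℂ φ U)
    (hg : DifferentiableOn ℂ g U)
    (hf0 : f (0, 0) = 0) (hφ0 : φ (0, 0) = 0) (hg0 : g (0, 0) = 0)
    (heq : ∀ p ∈ U,
      (g p - (starRingEnd ℂ) (g p)) * (1 - (‖φ p‖ : ℂ) ^ 2)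
        - 2 * Complex.I * (‖f p‖ : ℂ) ^ 2
        - 2 * Complex.I * ((((f p) ^ 2 * (starRingEnd ℂ) (φ p)).re : ℝ) : ℂ) = 0) :
    ∀ p ∈ U, g p = 0 ∧ f p = 0 :=
  nowhere_transversal_maps_general U hU hconn h0 f φ g hf hφ hg hφ0 hg0 heq
end
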